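/- If a point P does not lie in the convex hull of points A₁,…,A_{d+1} in ℝ^d and the d+2 points are in general position, then the intersection of the simplex ⟨A₁,…,A_{d+1}⟩ with the cone from P over any facet-complementary subset meets in at most one point: specifically, if I ⊔ J partitions {1,…,d+1} and the convex hull of {A_i : i ∈ I} meets the convex hull of {P} ∪ {A_j : j ∈ J}, the intersection is a single point. -/

import Mathlib

/-!
A point of the intersection is `x = ∑_{i ∈ I} aᵢ Aᵢ = t P + ∑_{j ∈ J} bⱼ Aⱼ`. The apex weight `t`
cannot vanish, since `A` is affinely independent and `I`, `J` are disjoint; hence `a - b` is `t`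
times the barycentric coordinates of `P` with respect to `A`. These coordinates are unique, so the
weights `a` of any two points of the intersection are proportional, and, both summing to `1`,
equal.
-/

open Finset

section Weights

variable {R E ι : Type*} [Semiring R] [PartialOrder R] [IsOrderedRing R]
  [AddCommMonoid E] [Module R E] [Fintype ι]

theorem exists_weights_of_mem_convexHull_image {A : ι → E} {s : Set ι} {x : E}
    (hx : x ∈ convexHull R (A '' s)) :
    ∃ w : ι → R, (∀ i, 0 ≤ w i) ∧ (∀ i ∉ s, w i = 0) ∧ ∑ i, w i = 1 ∧
      ∑ i, w i • A i = x := by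
  classical
  suffices convexHull R (A '' s) ⊆ {y | ∃ w : ι → R, (∀ i, 0 ≤ w i) ∧ (∀ i ∉ s, w i = 0) ∧
      ∑ i, w i = 1 ∧ ∑ i, w i • A i = y} from this hx
  refine convexHull_min ?_ ?_
  · rintro _ ⟨i, hi, rfl⟩
    refine ⟨Pi.single i 1, fun j => ?_, fun j hj => ?_, by simp, by simp [Pi.single_apply]⟩
    · by_cases h : j = i <;> simp [h]
    · simp [show j ≠ i from fun h => hj (h ▸ hi)]
  · rintro _ ⟨w, hw₀, hws, hw₁, rfl⟩ _ ⟨w', hw₀', hws', hw₁', rfl⟩ a b ha hb hab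
    refine ⟨a • w + b • w', fun i => ?_, fun i hi => ?_, ?_, ?_⟩
    · simp only [Pi.add_apply, Pi.smul_apply, smul_eq_mul]
      exact add_nonneg (mul_nonneg ha (hw₀ i)) (mul_nonneg hb (hw₀' i))
    · simp [hws i hi, hws' i hi]
    · simp [sum_add_distrib, ← mul_sum, hw₁, hw₁', hab]
    · simp [add_smul, mul_smul, sum_add_distrib, smul_sum]

theorem exists_weights_of_mem_convexHull_insert_image {A : ι → E} {s : Set ι} {P x : E}
    (hx : x ∈ convexHull R (insert P (A '' s))) :
    ∃ t : R, ∃ b : ι → R, 0 ≤ t ∧ (∀ i, 0 ≤ b i) ∧ (∀ i ∉ s, b i = 0) ∧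
      t + ∑ i, b i = 1 ∧ t • P + ∑ i, b i • A i = x := by
  have himage :
      insert P (A '' s) = (fun o : Option ι => o.elim P A) '' insert none (some '' s) := by
    simp [Set.image_insert_eq, Set.image_image]
  obtain ⟨w, hw₀, hws, hw₁, hwx⟩ := exists_weights_of_mem_convexHull_image (himage ▸ hx)
  refine ⟨w none, fun i => w (some i), hw₀ _, fun i => hw₀ _,
    fun i hi => hws _ (by simpa using hi), by simpa [Fintype.sum_option] using hw₁,
    by simpa [Fintype.sum_option] using hwx⟩

end Weights

theorem AffineIndependent.smul_eq_smul_of_sum_smul_eq_smul {k V ι : Type*} [CommRing k]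
    [AddCommGroup V] [Module k V] [Fintype ι] {A : ι → V} (hA : AffineIndependent k A)
    {c c' : ι → k} {t t' : k} {P : V} (hc : ∑ i, c i = t) (hcP : ∑ i, c i • A i = t • P)
    (hc' : ∑ i, c' i = t') (hcP' : ∑ i, c' i • A i = t' • P) : t' • c = t • c' := by
  funext i
  refine hA.eq_of_sum_eq_sum (s := univ) (w₁ := t' • c) (w₂ := t • c') ?_ ?_ i (mem_univ i)
  · simp [← mul_sum, hc, hc', mul_comm]
  · simp only [Pi.smul_apply, smul_eq_mul, mul_smul, ← smul_sum, hcP, hcP']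
    exact smul_comm t' t P

theorem AffineIndependent.comp_of_map_univ {k V Q ι κ : Type*} [Ring k] [AddCommGroup V]
    [Module k V] [AddTorsor V Q] [Fintype κ] {p : ι → Q} (e : κ ↪ ι)
    (h : AffineIndependent k (fun i : (univ.map e : Finset ι) => p i)) :
    AffineIndependent k (p ∘ e) :=
  h.comp_embedding (⟨fun j => ⟨e j, mem_map_of_mem e (mem_univ j)⟩,
    fun _ _ hij => e.injective (congrArg Subtype.val hij)⟩ : κ ↪ (univ.map e : Finset ι))

section ApexCoordinates

variable {k V ι : Type*} [Field k] [LinearOrder k] [IsStrictOrderedRing k] [AddCommGroup V]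
  [Module k V] [Fintype ι] {A : ι → V} {I J : Set ι}

theorem AffineIndependent.exists_apex_coords (hA : AffineIndependent k A) (hIJ : Disjoint I J)
    {P x : V} (hx : x ∈ convexHull k (A '' I) ∩ convexHull k (insert P (A '' J))) :
    ∃ a c : ι → k, ∃ t : k, t ≠ 0 ∧ (∀ i ∉ I, a i = 0) ∧ (∀ i ∈ I, c i = a i) ∧
      ∑ i, a i = 1 ∧ ∑ i, a i • A i = x ∧ ∑ i, c i = t ∧ ∑ i, c i • A i = t • P := by
  obtain ⟨a, -, haI, ha₁, hax⟩ := exists_weights_of_mem_convexHull_image hx.1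
  obtain ⟨t, b, -, -, hbJ, htb, hx'⟩ := exists_weights_of_mem_convexHull_insert_image hx.2
  have hcI : ∀ i ∈ I, (a - b) i = a i := fun i hi => by
    simp [hbJ i (Set.disjoint_left.1 hIJ hi)]
  have hc : ∑ i, (a - b) i = t := by
    simp only [Pi.sub_apply, sum_sub_distrib, ha₁]
    linear_combination -htb
  have hcP : ∑ i, (a - b) i • A i = t • P := by
    simp only [Pi.sub_apply, sub_smul, sum_sub_distrib, hax, ← hx', add_sub_cancel_right]
  refine ⟨a, a - b, t, ?_, haI, hcI, ha₁, hax, hc, hcP⟩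
  rintro rfl
  have hc₀ := hA.eq_zero_of_sum_eq_zero (s := univ) hc (by rw [hcP, zero_smul])
  have ha₀ : a = 0 := funext fun i => by
    by_cases hi : i ∈ I
    · rw [← hcI i hi]; exact hc₀ i (mem_univ i)
    · exact haI i hi
  simp [ha₀] at ha₁

theorem AffineIndependent.subsingleton_convexHull_inter_convexHull_insert
    (hA : AffineIndependent k A) (hIJ : Disjoint I J) (P : V) :
    (convexHull k (A '' I) ∩ convexHull k (insert P (A '' J))).Subsingleton := by
  intro x hx y hy
  obtain ⟨a, c, t, ht, haI, hcI, ha₁, rfl, hc, hcP⟩ := hA.exists_apex_coords hIJ hx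
  obtain ⟨a', c', t', -, haI', hcI', ha₁', rfl, hc', hcP'⟩ := hA.exists_apex_coords hIJ hy
  have hscale := hA.smul_eq_smul_of_sum_smul_eq_smul hc hcP hc' hcP'
  have ha : t' • a = t • a' := funext fun i => by
    by_cases hi : i ∈ I
    · simpa [hcI i hi, hcI' i hi] using congrFun hscale i
    · simp [haI i hi, haI' i hi]
  have ht' : t' = t := by
    simpa [← mul_sum, ha₁, ha₁'] using congrArg (fun w => ∑ i, w i) ha
  rw [ht'] at ha
  rw [smul_right_injective _ ht ha]

end ApexCoordinates

theorem cone_simplex_intersection_singleton_general (d : ℕ)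
    (P : Fin d → ℝ) (A : Fin (d + 1) → (Fin d → ℝ))
    (hgen : ∀ s : Finset (Fin (d + 2)), s.card = d + 1 →
      AffineIndependent ℝ (fun i : s => (Fin.cons P A : Fin (d + 2) → (Fin d → ℝ)) i))
    (I J : Set (Fin (d + 1))) (hdisj : I ∩ J = ∅)
    (hmeet : (convexHull ℝ (A '' I) ∩ convexHull ℝ ({P} ∪ A '' J)).Nonempty) :
    ∃ x : Fin d → ℝ, convexHull ℝ (A '' I) ∩ convexHull ℝ ({P} ∪ A '' J) = {x} := by
  have hA : AffineIndependent ℝ A := (hgen _ (by simp)).comp_of_map_univ (Fin.succEmb (d + 1))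
  obtain ⟨x, hx⟩ := hmeet
  rw [Set.singleton_union] at hx ⊢
  exact ⟨x, (hA.subsingleton_convexHull_inter_convexHull_insert
    (Set.disjoint_iff_inter_eq_empty.2 hdisj) P).eq_singleton_of_mem hx⟩

theorem cone_simplex_intersection_singleton (d : ℕ) (hd : 1 ≤ d)
    (P : Fin d → ℝ) (A : Fin (d + 1) → (Fin d → ℝ))
    (hgen : ∀ s : Finset (Fin (d + 2)), s.card = d + 1 →
      AffineIndependent ℝ (fun i : s => (Fin.cons P A : Fin (d + 2) → (Fin d → ℝ)) i))
    (hP : P ∉ convexHull ℝ (Set.range A))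
    (I J : Set (Fin (d + 1))) (hdisj : I ∩ J = ∅) (hunion : I ∪ J = Set.univ)
    (hmeet : (convexHull ℝ (A '' I) ∩ convexHull ℝ ({P} ∪ A '' J)).Nonempty) :
    ∃ x : Fin d → ℝ, convexHull ℝ (A '' I) ∩ convexHull ℝ ({P} ∪ A '' J) = {x} :=
  cone_simplex_intersection_singleton_general d P A hgen I J hdisj hmeet
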